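/- arXiv:2402.10106 — 3 statements merged into one kernel-verified Lean document; each statement's English description precedes it below -/
import Mathlib

section
/- The projection of Sp(2) to its first row is surjective onto S⁷: for every (a,c) ∈ ℍ × ℍ with ‖a‖² + ‖c‖² = 1 there exists a unitary 2×2 quaternionic matrix whose first row is (a,c). -/
/-!
Write `a = ‖a‖ u` and `c = ‖c‖ v` with unit quaternions `u`, `v`. Since `‖a‖² + ‖c‖² = 1`, the
real rotation `!![‖a‖, ‖c‖; -‖c‖, ‖a‖]` is unitary, and so is its product with `diag(u, v)`,
whose first row is `(‖a‖ u, ‖c‖ v) = (a, c)`.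
-/

open Matrix

theorem Matrix.diagonal_mem_unitary {n R : Type*} [Fintype n] [DecidableEq n] [Semiring R]
    [StarRing R] {d : n → R} (hd : ∀ i, d i ∈ unitary R) :
    diagonal d ∈ unitary (Matrix n n R) := by
  simp only [Unitary.mem_iff, star_eq_conjTranspose, diagonal_conjTranspose,
    diagonal_mul_diagonal, ← diagonal_one]
  constructor <;> congr 1 <;> ext i
  · exact Unitary.star_mul_self_of_mem (hd i)
  · exact Unitary.mul_star_self_of_mem (hd i)

theorem Matrix.rotation_mem_unitary {A : Type*} [Ring A] [StarRing A] {p q : A}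
    (hp : IsSelfAdjoint p) (hq : IsSelfAdjoint q) (hpq : Commute p q) (h : p * p + q * q = 1) :
    !![p, q; -q, p] ∈ unitary (Matrix (Fin 2) (Fin 2) A) := by
  rw [Unitary.mem_iff, star_eq_conjTranspose]
  constructor <;> ext i j <;> fin_cases i <;> fin_cases j <;>
    simp [mul_apply, Fin.sum_univ_two, hp.star_eq, hq.star_eq, h, hpq.eq, add_comm (q * q)]

namespace Quaternion

theorem mem_unitary_of_norm_eq_one {u : Quaternion ℝ} (hu : ‖u‖ = 1) :
    u ∈ unitary (Quaternion ℝ) := by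
  rw [Unitary.mem_iff, star_mul_self, self_mul_star, normSq_eq_norm_mul_self, hu]
  simp

theorem exists_mem_unitary_norm_smul_eq (a : Quaternion ℝ) :
    ∃ u ∈ unitary (Quaternion ℝ), ‖a‖ • u = a := by
  rcases eq_or_ne a 0 with rfl | ha
  · exact ⟨1, one_mem _, by simp⟩
  have hna : ‖a‖ ≠ 0 := norm_ne_zero_iff.2 ha
  refine ⟨‖a‖⁻¹ • a, mem_unitary_of_norm_eq_one ?_, smul_inv_smul₀ hna a⟩
  rw [norm_smul, norm_inv, norm_norm, inv_mul_cancel₀ hna]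

end Quaternion

/-- The projection of `Sp(2)` to its first row is surjective onto `S⁷`:
for every `(a,c) ∈ ℍ × ℍ` with `‖a‖² + ‖c‖² = 1` there is a unitary 2×2 quaternionic
matrix whose first row is `(a, c)`. -/
theorem sp2_firstRow_surjective (a c : Quaternion ℝ) (h : ‖a‖ ^ 2 + ‖c‖ ^ 2 = 1) :
    ∃ A ∈ unitary (Matrix (Fin 2) (Fin 2) (Quaternion ℝ)), A 0 0 = a ∧ A 0 1 = c := by
  obtain ⟨u, hu, hau⟩ := Quaternion.exists_mem_unitary_norm_smul_eq a
  obtain ⟨v, hv, hcv⟩ := Quaternion.exists_mem_unitary_norm_smul_eq c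
  have hnorm : (‖a‖ : Quaternion ℝ) * ‖a‖ + ‖c‖ * ‖c‖ = 1 := by
    norm_cast
    rw [← sq, ← sq, h, Quaternion.coe_one]
  have hrot : !![(‖a‖ : Quaternion ℝ), ‖c‖; -‖c‖, ‖a‖] ∈ unitary _ :=
    rotation_mem_unitary (Quaternion.star_coe _) (Quaternion.star_coe _)
      (Quaternion.coe_commute _ _) hnorm
  have hdiag : diagonal ![u, v] ∈ unitary _ :=
    diagonal_mem_unitary (Fin.forall_fin_two.2 ⟨hu, hv⟩)
  refine ⟨_, mul_mem hrot hdiag, ?_, ?_⟩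
  · simpa [mul_apply, Fin.sum_univ_two, Quaternion.coe_mul_eq_smul] using hau
  · simpa [mul_apply, Fin.sum_univ_two, Quaternion.coe_mul_eq_smul] using hcv
end

section
/- The Gromoll–Meyer ⋆-action q ⋆ (a c; b d) := (q a q̄, q c; q b q̄, q d) of unit quaternions preserves Sp(2), defines a left group action of S³ on Sp(2) ((q₁q₂) ⋆ A = q₁ ⋆ (q₂ ⋆ A) and 1 ⋆ A = A), and this action is free: if A ∈ Sp(2) and q ⋆ A = A for a unit quaternion q, then q = 1. -/
/-- The Gromoll–Meyer `⋆`-action of a quaternion `q` on a 2×2 quaternionic matrix: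
`q ⋆ (a c; b d) = (q a q̄, q c; q b q̄, q d)` (conjugation on the first column, left
multiplication on the second column). -/
noncomputable def gmAct (q : Quaternion ℝ) (A : Matrix (Fin 2) (Fin 2) (Quaternion ℝ)) :
    Matrix (Fin 2) (Fin 2) (Quaternion ℝ) :=
  Matrix.of fun i j => if j = 0 then q * A i j * star q else q * A i j

/-- The Gromoll–Meyer `⋆`-action preserves `Sp(2)`, defines a left group
action of the unit quaternions `S³` on `Sp(2)`, and this action is free. -/
theorem gromollMeyer_action_sp2 :
    (∀ q : Quaternion ℝ, ‖q‖ = 1 →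
      ∀ A ∈ unitary (Matrix (Fin 2) (Fin 2) (Quaternion ℝ)),
        gmAct q A ∈ unitary (Matrix (Fin 2) (Fin 2) (Quaternion ℝ))) ∧
    (∀ (q₁ q₂ : Quaternion ℝ) (A : Matrix (Fin 2) (Fin 2) (Quaternion ℝ)),
        gmAct (q₁ * q₂) A = gmAct q₁ (gmAct q₂ A)) ∧
    (∀ A : Matrix (Fin 2) (Fin 2) (Quaternion ℝ), gmAct 1 A = A) ∧
    (∀ q : Quaternion ℝ, ‖q‖ = 1 →
      ∀ A ∈ unitary (Matrix (Fin 2) (Fin 2) (Quaternion ℝ)),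
        gmAct q A = A → q = 1) := by
  have key : ∀ q : Quaternion ℝ, ‖q‖ = 1 → star q * q = 1 ∧ q * star q = 1 := by
    intro q hq
    have h1 : Quaternion.normSq q = 1 := by
      rw [Quaternion.normSq_eq_norm_mul_self, hq]; norm_num
    constructor
    · rw [Quaternion.star_mul_self, h1]; norm_num
    · rw [Quaternion.self_mul_star, h1]; norm_num
  refine ⟨?_, ?_, ?_, ?_⟩
  · intro q hq A hA
    obtain ⟨hs, hq2⟩ := key q hq
    set Q : Matrix (Fin 2) (Fin 2) (Quaternion ℝ) := Matrix.diagonal (fun _ => q) with hQdef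
    set P : Matrix (Fin 2) (Fin 2) (Quaternion ℝ) := Matrix.diagonal ![star q, 1] with hPdef
    have hrep : gmAct q A = Q * (A * P) := by
      refine Matrix.ext fun i j => ?_
      fin_cases j <;>
        simp [gmAct, hQdef, hPdef, Matrix.mul_apply, Matrix.diagonal_apply,
          Fin.sum_univ_two, mul_assoc]
    have hQ : Q ∈ unitary (Matrix (Fin 2) (Fin 2) (Quaternion ℝ)) := by
      rw [Unitary.mem_iff]
      constructor <;>
      · refine Matrix.ext fun i j => ?_
        fin_cases i <;> fin_cases j <;>
          simp [hQdef, Matrix.star_eq_conjTranspose, Matrix.mul_apply,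
            Matrix.conjTranspose_apply, Matrix.diagonal_apply, Fin.sum_univ_two,
            Matrix.one_apply, hs, hq2]
    have hP : P ∈ unitary (Matrix (Fin 2) (Fin 2) (Quaternion ℝ)) := by
      rw [Unitary.mem_iff]
      constructor <;>
      · refine Matrix.ext fun i j => ?_
        fin_cases i <;> fin_cases j <;>
          simp [hPdef, Matrix.star_eq_conjTranspose, Matrix.mul_apply,
            Matrix.conjTranspose_apply, Matrix.diagonal_apply, Fin.sum_univ_two,
            Matrix.one_apply, hs, hq2]
    rw [hrep]
    exact mul_mem hQ (mul_mem hA hP)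
  · intro q₁ q₂ A
    refine Matrix.ext fun i j => ?_
    simp only [gmAct, Matrix.of_apply]
    by_cases hj : j = 0 <;> simp [hj, star_mul, mul_assoc]
  · intro A
    refine Matrix.ext fun i j => ?_
    simp [gmAct]
  · intro q hq A hA hfix
    rw [Unitary.mem_iff] at hA
    obtain ⟨hA1, _⟩ := hA
    have hcol : star (A 0 1) * A 0 1 + star (A 1 1) * A 1 1 = 1 := by
      have h : (star A * A) 1 1 = (1 : Matrix (Fin 2) (Fin 2) (Quaternion ℝ)) 1 1 := by rw [hA1]
      simpa [Matrix.star_eq_conjTranspose, Matrix.mul_apply, Matrix.conjTranspose_apply,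
        Fin.sum_univ_two, Matrix.one_apply] using h
    have hne : A 0 1 ≠ 0 ∨ A 1 1 ≠ 0 := by
      by_contra h
      push_neg at h
      rw [h.1, h.2] at hcol
      simp at hcol
    have hfe : ∀ i, q * A i 1 = A i 1 := by
      intro i
      have := congrFun (congrFun hfix i) 1
      simpa [gmAct] using this
    rcases hne with h | h
    · have h2 : (q - 1) * A 0 1 = 0 := by rw [sub_mul, one_mul, hfe 0, sub_self]
      rcases mul_eq_zero.mp h2 with h3 | h3
      · exact sub_eq_zero.mp h3
      · exact absurd h3 h
    · have h2 : (q - 1) * A 1 1 = 0 := by rw [sub_mul, one_mul, hfe 1, sub_self]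
      rcases mul_eq_zero.mp h2 with h3 | h3
      · exact sub_eq_zero.mp h3
      · exact absurd h3 h
end

section
/- The assignment q · (a,c) := (q a q̄, q c) maps S⁷ to S⁷ for every unit quaternion q and defines a left action of S³ on S⁷; moreover the first-row projection π : Sp(2) → S⁷ is equivariant: π(q ⋆ A) = q · π(A) for all unit quaternions q and all A ∈ Sp(2). In other words, the Gromoll–Meyer ⋆-action descends along π to the S³-action (a,c) ↦ (q a q̄, q c) on S⁷. -/
/-- The induced action of a quaternion `q` on `ℍ × ℍ ⊇ S⁷`: `q · (a, c) = (q a q̄, q c)`. -/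
noncomputable def s7Act (q : Quaternion ℝ) (p : Quaternion ℝ × Quaternion ℝ) :
    Quaternion ℝ × Quaternion ℝ :=
  (q * p.1 * star q, q * p.2)

theorem s7Act_one (p : Quaternion ℝ × Quaternion ℝ) : s7Act 1 p = p := by
  simp [s7Act]

theorem s7Act_mul (q₁ q₂ : Quaternion ℝ) (p : Quaternion ℝ × Quaternion ℝ) :
    s7Act (q₁ * q₂) p = s7Act q₁ (s7Act q₂ p) := by
  simp [s7Act, mul_assoc]

theorem norm_sq_add_norm_sq_s7Act {q : Quaternion ℝ} (hq : ‖q‖ = 1)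
    (p : Quaternion ℝ × Quaternion ℝ) :
    ‖(s7Act q p).1‖ ^ 2 + ‖(s7Act q p).2‖ ^ 2 = ‖p.1‖ ^ 2 + ‖p.2‖ ^ 2 := by
  simp only [s7Act, norm_mul, norm_star, hq, one_mul, mul_one]

theorem gmAct_firstRow (q : Quaternion ℝ) (A : Matrix (Fin 2) (Fin 2) (Quaternion ℝ)) :
    (gmAct q A 0 0, gmAct q A 0 1) = s7Act q (A 0 0, A 0 1) := by
  simp [gmAct, s7Act]

/-- The assignment `q · (a,c) := (q a q̄, q c)` maps `S⁷` to `S⁷` for every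
unit quaternion `q` and defines a left action of `S³` on `S⁷`; moreover the first-row
projection `π : Sp(2) → S⁷` is equivariant: `π (q ⋆ A) = q · π A` for all unit quaternions
`q` and all `A ∈ Sp(2)`. -/
theorem gromollMeyer_descends_to_s7 :
    (∀ q : Quaternion ℝ, ‖q‖ = 1 → ∀ p : Quaternion ℝ × Quaternion ℝ,
        ‖p.1‖ ^ 2 + ‖p.2‖ ^ 2 = 1 → ‖(s7Act q p).1‖ ^ 2 + ‖(s7Act q p).2‖ ^ 2 = 1) ∧
    (∀ (q₁ q₂ : Quaternion ℝ) (p : Quaternion ℝ × Quaternion ℝ),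
        s7Act (q₁ * q₂) p = s7Act q₁ (s7Act q₂ p)) ∧
    (∀ p : Quaternion ℝ × Quaternion ℝ, s7Act 1 p = p) ∧
    (∀ q : Quaternion ℝ, ‖q‖ = 1 →
      ∀ A ∈ unitary (Matrix (Fin 2) (Fin 2) (Quaternion ℝ)),
        (gmAct q A 0 0, gmAct q A 0 1) = s7Act q (A 0 0, A 0 1)) :=
  ⟨fun _ hq p hp => (norm_sq_add_norm_sq_s7Act hq p).trans hp, s7Act_mul, s7Act_one,
    fun q _ A _ => gmAct_firstRow q A⟩
end
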